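/- Let V be a finite type and let E be a finite set of ordered pairs of elements of V forming a rooted binary directed tree: there is exactly one vertex of in-degree 0, every other vertex has in-degree exactly 1, every vertex has out-degree 0 or 2, and the underlying undirected simple graph (with u adjacent to w iff (u,w) ∈ E or (w,u) ∈ E) is connected and acyclic. Let a and c be two distinct vertices of out-degree 0 (leaves), and let P be the vertex set of the unique path between a and c in the underlying undirected tree. Then the number of directed edges (v, w) ∈ E with v ∈ P \ {a, c} and w ∉ P equals |P| − 3. -/

import Mathlib

/-!
Since every vertex has in-degree at most one and the root has none, `E` has at most `|V| - 1`
arcs, as many as the tree has edges; so `E` has no loops and each tree edge carries exactly one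
arc. An interior vertex of the path is not a leaf, for otherwise both its path neighbours would be
parents of it. Hence the `|P| - 2` interior vertices emit `2 (|P| - 2)` arcs. Among these, the ones
ending in `P` are exactly the `|P| - 1` path edges (in a tree, an edge between two path vertices
lies on the path, and the leaves `a`, `c` emit nothing), which leaves `|P| - 3` pendant arcs.
-/

open Finset SimpleGraph

namespace SimpleGraph

variable {V : Type*} {G : SimpleGraph V}

lemma Walk.IsPath.exists_adj_ne_of_mem_support [DecidableEq V] {u v w : V} {p : G.Walk u w}
    (hp : p.IsPath) (hv : v ∈ p.support) (hvu : v ≠ u) (hvw : v ≠ w) :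
    ∃ x y, x ≠ y ∧ G.Adj v x ∧ G.Adj v y := by
  have hnil₁ : ¬(p.takeUntil v hv).Nil := Walk.not_nil_of_ne hvu.symm
  have hnil₂ : ¬(p.dropUntil v hv).Nil := Walk.not_nil_of_ne hvw
  refine ⟨(p.takeUntil v hv).penultimate, (p.dropUntil v hv).snd, ?_,
    (Walk.adj_penultimate hnil₁).symm, Walk.adj_snd hnil₂⟩
  have hsupp := p.take_spec hv ▸ hp.support_nodup
  rw [Walk.support_append] at hsupp
  exact fun h => List.disjoint_of_nodup_append hsupp
    ((p.takeUntil v hv).getVert_mem_support _) (h ▸ Walk.snd_mem_tail_support hnil₂)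

lemma IsAcyclic.mk_mem_edges_of_adj_start (hG : G.IsAcyclic) {u v w : V} {p : G.Walk u v}
    (hp : p.IsPath) (hadj : G.Adj u w) (hw : w ∈ p.support) : s(u, w) ∈ p.edges := by
  have hnil : ¬p.Nil := fun h => by
    rw [Walk.nil_iff_support_eq.mp h, List.mem_singleton] at hw
    exact hadj.ne hw.symm
  exact hG.eq_snd_of_adj_start hp hadj hw ▸ Walk.mk_start_snd_mem_edges hnil

lemma IsAcyclic.mk_mem_edges_of_adj_of_mem_support [DecidableEq V] (hG : G.IsAcyclic)
    {a c u v : V} {p : G.Walk a c} (hp : p.IsPath) (hu : u ∈ p.support) (hv : v ∈ p.support)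
    (hadj : G.Adj u v) : s(u, v) ∈ p.edges := by
  rw [← p.take_spec hu, Walk.support_append, List.mem_append] at hv
  rcases hv with hv | hv
  · have h := hG.mk_mem_edges_of_adj_start (hp.takeUntil hu).reverse hadj (by simpa using hv)
    rw [Walk.edges_reverse, List.mem_reverse] at h
    exact p.edges_takeUntil_subset_edges hu h
  · exact p.edges_dropUntil_subset_edges hu
      (hG.mk_mem_edges_of_adj_start (hp.dropUntil hu) hadj (List.mem_of_mem_tail hv))

end SimpleGraph

section RootedTree

variable {V : Type*} [DecidableEq V] {E : Finset (V × V)}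

lemma card_lt_card_of_inDegree_le_one [Fintype V] (hin : ∀ v, #{e ∈ E | e.2 = v} ≤ 1) {r : V}
    (hr : #{e ∈ E | e.2 = r} = 0) : #E < Fintype.card V := by
  have hinj : Set.InjOn Prod.snd (E : Set (V × V)) := fun e he f hf hef =>
    card_le_one.mp (hin e.2) e (mem_filter.mpr ⟨he, rfl⟩) f (mem_filter.mpr ⟨hf, hef.symm⟩)
  have hsub : E.image Prod.snd ⊆ univ.erase r := fun x hx => by
    obtain ⟨e, he, rfl⟩ := mem_image.mp hx
    exact mem_erase.mpr ⟨card_filter_eq_zero_iff.mp hr e he, mem_univ _⟩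
  calc #E = #(E.image Prod.snd) := (card_image_of_injOn hinj).symm
    _ ≤ #(univ.erase r) := card_le_card hsub
    _ < Fintype.card V := card_erase_lt_of_mem (mem_univ r)

lemma edgeSet_fromRel_mem :
    (fromRel fun u w => (u, w) ∈ E).edgeSet = Sym2.mk.uncurry '' ↑{e ∈ E | e.1 ≠ e.2} := by
  ext ⟨u, w⟩
  simp only [mem_edgeSet, fromRel_adj, coe_filter, Set.mem_image, Set.mem_ofPred_eq, Prod.exists]
  constructor
  · rintro ⟨hne, h | h⟩
    · exact ⟨u, w, ⟨h, hne⟩, rfl⟩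
    · exact ⟨w, u, ⟨h, hne.symm⟩, Sym2.eq_swap⟩
  · rintro ⟨x, y, ⟨h, hne⟩, hxy⟩
    rcases Sym2.eq_iff.mp hxy with ⟨rfl, rfl⟩ | ⟨rfl, rfl⟩
    · exact ⟨hne, Or.inl h⟩
    · exact ⟨hne.symm, Or.inr h⟩

lemma forall_ne_and_injOn_sym2Mk_of_isTree [Fintype V]
    (hT : (fromRel fun u w => (u, w) ∈ E).IsTree) (hcard : #E < Fintype.card V) :
    (∀ e ∈ E, e.1 ≠ e.2) ∧ Set.InjOn Sym2.mk.uncurry (E : Set (V × V)) := by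
  classical
  have himage : (fromRel fun u w => (u, w) ∈ E).edgeFinset
      = {e ∈ E | e.1 ≠ e.2}.image Sym2.mk.uncurry :=
    coe_injective (by rw [coe_edgeFinset, coe_image, edgeSet_fromRel_mem])
  have htree := hT.card_edgeFinset
  rw [himage] at htree
  have himage_le : #({e ∈ E | e.1 ≠ e.2}.image Sym2.mk.uncurry) ≤ #{e ∈ E | e.1 ≠ e.2} :=
    card_image_le
  have hfilter_le : #{e ∈ E | e.1 ≠ e.2} ≤ #E := card_filter_le _ _
  have hloop : ∀ e ∈ E, e.1 ≠ e.2 := card_filter_eq_iff.mp (by omega)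
  refine ⟨hloop, ?_⟩
  rw [← filter_eq_self.mpr hloop]
  exact card_image_iff.mp (by omega)

lemma card_filter_fst_ne_zero_of_mem_support (hin : ∀ v, #{e ∈ E | e.2 = v} ≤ 1) {a c v : V}
    {p : (fromRel fun u w => (u, w) ∈ E).Walk a c} (hp : p.IsPath) (hv : v ∈ p.support)
    (hva : v ≠ a) (hvc : v ≠ c) : #{e ∈ E | e.1 = v} ≠ 0 := by
  intro hleaf
  have hparent : ∀ x, (fromRel fun u w => (u, w) ∈ E).Adj v x → (x, v) ∈ E := fun x hx =>
    ((fromRel_adj _ _ _).mp hx).2.resolve_left fun h =>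
      card_filter_eq_zero_iff.mp hleaf _ h rfl
  obtain ⟨x, y, hxy, hx, hy⟩ := hp.exists_adj_ne_of_mem_support hv hva hvc
  have : 1 < #{e ∈ E | e.2 = v} := one_lt_card.mpr
    ⟨(x, v), mem_filter.mpr ⟨hparent x hx, rfl⟩, (y, v), mem_filter.mpr ⟨hparent y hy, rfl⟩,
      by simpa using hxy⟩
  exact (hin v).not_gt this

lemma image_sym2Mk_filter_mem_support (hloop : ∀ e ∈ E, e.1 ≠ e.2)
    (hA : (fromRel fun u w => (u, w) ∈ E).IsAcyclic) {a c : V}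
    {p : (fromRel fun u w => (u, w) ∈ E).Walk a c} (hp : p.IsPath) :
    {e ∈ E | e.1 ∈ p.support ∧ e.2 ∈ p.support}.image Sym2.mk.uncurry = p.edges.toFinset := by
  ext x
  induction x using Sym2.ind with
  | _ u w =>
    simp only [mem_image, mem_filter, List.mem_toFinset, Prod.exists]
    constructor
    · rintro ⟨x, y, ⟨h, hx, hy⟩, hxy⟩
      rw [← hxy]
      exact hA.mk_mem_edges_of_adj_of_mem_support hp hx hy
        ((fromRel_adj _ _ _).mpr ⟨hloop _ h, Or.inl h⟩)
    · intro he
      have hu := p.fst_mem_support_of_mem_edges he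
      have hw := p.snd_mem_support_of_mem_edges he
      rcases ((fromRel_adj _ _ _).mp (p.adj_of_mem_edges he)).2 with h | h
      · exact ⟨u, w, ⟨h, hu, hw⟩, rfl⟩
      · exact ⟨w, u, ⟨h, hw, hu⟩, Sym2.eq_swap⟩

lemma card_filter_mem_support_eq_length (hloop : ∀ e ∈ E, e.1 ≠ e.2)
    (hinj : Set.InjOn Sym2.mk.uncurry (E : Set (V × V)))
    (hA : (fromRel fun u w => (u, w) ∈ E).IsAcyclic) {a c : V}
    {p : (fromRel fun u w => (u, w) ∈ E).Walk a c} (hp : p.IsPath) :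
    #{e ∈ E | e.1 ∈ p.support ∧ e.2 ∈ p.support} = p.length := by
  rw [← card_image_of_injOn (hinj.mono (filter_subset _ E)),
    image_sym2Mk_filter_mem_support hloop hA hp,
    List.toFinset_card_of_nodup hp.isTrail.edges_nodup, Walk.length_edges]

end RootedTree

/-- In a rooted binary directed tree (a finite set `E` of ordered pairs over a
finite vertex type `V`, with exactly one vertex of in-degree `0`, all other
vertices of in-degree `1`, every vertex of out-degree `0` or `2`, and whose
underlying undirected simple graph is connected and acyclic, i.e. a tree), for
two distinct leaves `a` and `c` with `P` the vertex set of the unique path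
between them in the underlying undirected tree, the number of directed edges
`(v, w) ∈ E` with `v ∈ P \ {a, c}` and `w ∉ P` equals `|P| - 3`. -/
theorem card_pendant_edges {V : Type*} [Fintype V] [DecidableEq V]
    (E : Finset (V × V))
    (hroot : ∃! r : V, (E.filter (fun e => e.2 = r)).card = 0)
    (hin : ∀ v : V, (E.filter (fun e => e.2 = v)).card ≠ 0 →
      (E.filter (fun e => e.2 = v)).card = 1)
    (hout : ∀ v : V, (E.filter (fun e => e.1 = v)).card = 0 ∨
      (E.filter (fun e => e.1 = v)).card = 2)
    (G : SimpleGraph V) (hG : G = SimpleGraph.fromRel (fun u w => (u, w) ∈ E))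
    (hT : G.IsTree)
    (a c : V) (hac : a ≠ c)
    (ha : (E.filter (fun e => e.1 = a)).card = 0)
    (hc : (E.filter (fun e => e.1 = c)).card = 0)
    (p : G.Walk a c) (hp : p.IsPath)
    (P : Finset V) (hP : P = p.support.toFinset) :
    (E.filter (fun e => e.1 ∈ P ∧ e.1 ≠ a ∧ e.1 ≠ c ∧ e.2 ∉ P)).card
      = P.card - 3 := by
  subst hG hP
  obtain ⟨r, hr, -⟩ := hroot
  have hin_le : ∀ v, #{e ∈ E | e.2 = v} ≤ 1 := fun v => by have := hin v; omega
  obtain ⟨hloop, hinj⟩ :=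
    forall_ne_and_injOn_sym2Mk_of_isTree hT (card_lt_card_of_inDegree_le_one hin_le hr)
  set P := p.support.toFinset
  have hPcard : #P = p.length + 1 := by
    rw [List.toFinset_card_of_nodup hp.support_nodup, Walk.length_support]
  set I := P \ {a, c}
  have hIcard : #I = #P - 2 := by
    rw [card_sdiff_of_subset (by simp [insert_subset_iff, P]), card_pair hac]
  have hout_I : #{e ∈ E | e.1 ∈ I} = 2 * #I := by
    rw [← sum_card_fiberwise_eq_card_filter, sum_const_nat fun v hv => ?_, mul_comm]
    simp only [I, P, mem_sdiff, mem_insert, mem_singleton, not_or, List.mem_toFinset] at hv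
    exact (hout v).resolve_left
      (card_filter_fst_ne_zero_of_mem_support hin_le hp hv.1 hv.2.1 hv.2.2)
  have hinner : #{e ∈ {e ∈ E | e.1 ∈ I} | e.2 ∈ P} = p.length := by
    rw [← card_filter_mem_support_eq_length hloop hinj hT.isAcyclic hp, filter_filter]
    refine congrArg card (filter_congr fun e he => ?_)
    simp [I, P, card_filter_eq_zero_iff.mp ha e he, card_filter_eq_zero_iff.mp hc e he]
  have hpendant : {e ∈ E | e.1 ∈ P ∧ e.1 ≠ a ∧ e.1 ≠ c ∧ e.2 ∉ P}
      = {e ∈ {e ∈ E | e.1 ∈ I} | e.2 ∉ P} := by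
    rw [filter_filter]
    exact filter_congr fun e _ => by simp [I, and_assoc]
  rw [hpendant]
  have := card_filter_add_card_filter_not (s := {e ∈ E | e.1 ∈ I}) (fun e => e.2 ∈ P)
  omega
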